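/- arXiv:2310.14509 — 2 statements merged into one kernel-verified Lean document; each statement's English description precedes it below -/
import Mathlib

section
/- Let J : Π → ℝ be a reward function on a set Π of policies and D : Π × Π → ℝ a metric on Π. Fix δ > 0 and M ≥ 1. Suppose π₁,…,π_M ∈ Π maximize ∑ᵢ J(πᵢ) subject to D(πⱼ, πₖ) ≥ δ for all j ≠ k, with optimal value T₁. Suppose π̃₁,…,π̃_M are defined iteratively so that π̃ᵢ maximizes J(π) subject to D(π, π̃ⱼ) ≥ δ/2 for all 1 ≤ j < i (and all these maxima exist). Then T₂ := ∑ᵢ J(π̃ᵢ) satisfies T₂ ≥ T₁. -/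
/-!
Fix the δ-separated population `p`. A point `x` is within `δ/2` of at most one member of `p`,
since two such members would be within `δ` of each other. Hence before step `i` of the greedy
iteration the points `q j`, `j < i`, rule out at most `i` members of `p`, so among the `i + 1`
best members of `p` one is still feasible at step `i`: the `i`-th greedy reward is at least the
`i`-th largest reward of `p`. Summing over `i` gives the claim.
-/

open Finset

section Separated

variable {P κ : Type*} [Fintype κ] {D : P → P → ℝ} {δ : ℝ}

lemma card_filter_lt_half_le_one (hsymm : ∀ a b, D a b = D b a)
    (htri : ∀ a b c, D a c ≤ D a b + D b c) {p : κ → P}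
    (hp : ∀ j k, j ≠ k → δ ≤ D (p j) (p k)) (x : P) :
    #{k | D (p k) x < δ / 2} ≤ 1 := by
  refine card_le_one.mpr fun a ha b hb => ?_
  by_contra hab
  simp only [mem_filter, mem_univ, true_and] at ha hb
  have := htri (p a) x (p b)
  rw [hsymm x (p b)] at this
  linarith [hp a b hab]

lemma card_filter_exists_lt_half_le {ι : Type*} (hsymm : ∀ a b, D a b = D b a)
    (htri : ∀ a b c, D a c ≤ D a b + D b c) {p : κ → P}
    (hp : ∀ j k, j ≠ k → δ ≤ D (p j) (p k)) (x : ι → P) (s : Finset ι)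
    [DecidablePred fun k => ∃ j ∈ s, D (p k) (x j) < δ / 2] :
    #{k | ∃ j ∈ s, D (p k) (x j) < δ / 2} ≤ #s := by
  classical
  have hsub : ({k | ∃ j ∈ s, D (p k) (x j) < δ / 2} : Finset κ) ⊆
      s.biUnion fun j => {k | D (p k) (x j) < δ / 2} := by
    intro k hk
    simpa using hk
  calc #{k | ∃ j ∈ s, D (p k) (x j) < δ / 2}
      ≤ #(s.biUnion fun j => {k | D (p k) (x j) < δ / 2}) := card_le_card hsub
    _ ≤ #s * 1 := card_biUnion_le_card_mul _ _ _ fun j _ =>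
        card_filter_lt_half_le_one hsymm htri hp (x j)
    _ = #s := mul_one _

end Separated

lemma sum_le_sum_of_le_of_card_exceptions_le {α : Type*} [AddCommMonoid α] [LinearOrder α]
    [IsOrderedAddMonoid α] {n : ℕ} (v w : Fin n → α) (B : Fin n → Finset (Fin n))
    (hB : ∀ i, #(B i) ≤ i) (hvw : ∀ i k, k ∉ B i → v k ≤ w i) :
    ∑ k, v k ≤ ∑ i, w i := by
  -- `σ` lists the indices by decreasing value of `v`
  set σ := Tuple.sort (OrderDual.toDual ∘ v)
  have hanti : Antitone (v ∘ σ) := fun a b hab =>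
    OrderDual.toDual_le_toDual.mp (Tuple.monotone_sort (OrderDual.toDual ∘ v) hab)
  have hle : ∀ i, v (σ i) ≤ w i := by
    intro i
    have hcard : #(B i) < #((Iic i).image σ) := by
      rw [card_image_of_injective _ σ.injective, Fin.card_Iic]
      exact Nat.lt_succ_of_le (hB i)
    obtain ⟨k, hk, hkB⟩ := exists_mem_notMem_of_card_lt_card hcard
    obtain ⟨m, hm, rfl⟩ := mem_image.mp hk
    exact (hanti (mem_Iic.mp hm)).trans (hvw i _ hkB)
  calc ∑ k, v k = ∑ i, v (σ i) := (Equiv.sum_comp σ v).symm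
    _ ≤ ∑ i, w i := sum_le_sum fun i _ => hle i

theorem stmt_0_general {P : Type*} (D : P → P → ℝ) (J : P → ℝ)
    (hsymm : ∀ a b, D a b = D b a)
    (htri : ∀ a b c, D a c ≤ D a b + D b c)
    (δ : ℝ) (M : ℕ)
    (p : Fin M → P)
    (hfeas : ∀ j k : Fin M, j ≠ k → δ ≤ D (p j) (p k))
    (q : Fin M → P)
    (hitermax : ∀ i : Fin M, ∀ x : P,
      (∀ j : Fin M, j < i → δ / 2 ≤ D x (q j)) → J x ≤ J (q i)) :
    ∑ i, J (p i) ≤ ∑ i, J (q i) := by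
  refine sum_le_sum_of_le_of_card_exceptions_le _ _
    (fun i => {k | ∃ j ∈ Iio i, D (p k) (q j) < δ / 2}) (fun i => ?_) (fun i k hk => ?_)
  · exact (card_filter_exists_lt_half_le hsymm htri hfeas q (Iio i)).trans_eq (Fin.card_Iio i)
  · refine hitermax i (p k) fun j hj => not_lt.mp fun hlt => hk ?_
    simpa using ⟨j, hj, hlt⟩

/-- Theorem 1: iterative learning with threshold δ/2 achieves total reward at least
that of population-based training with threshold δ. -/
theorem stmt_0 {P : Type*} (D : P → P → ℝ) (J : P → ℝ)
    (hsymm : ∀ a b, D a b = D b a)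
    (htri : ∀ a b c, D a c ≤ D a b + D b c)
    (hnonneg : ∀ a b, 0 ≤ D a b)
    (δ : ℝ) (hδ : 0 < δ) (M : ℕ) (hM : 1 ≤ M)
    (p : Fin M → P)
    (hfeas : ∀ j k : Fin M, j ≠ k → δ ≤ D (p j) (p k))
    (hopt : ∀ p' : Fin M → P, (∀ j k : Fin M, j ≠ k → δ ≤ D (p' j) (p' k)) →
      ∑ i, J (p' i) ≤ ∑ i, J (p i))
    (q : Fin M → P)
    (hiterfeas : ∀ i j : Fin M, j < i → δ / 2 ≤ D (q i) (q j))
    (hitermax : ∀ i : Fin M, ∀ x : P,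
      (∀ j : Fin M, j < i → δ / 2 ≤ D x (q j)) → J x ≤ J (q i)) :
    ∑ i, J (p i) ≤ ∑ i, J (q i) :=
  stmt_0_general D J hsymm htri δ M p hfeas q hitermax
end

section
/- Let Π be a set, D : Π × Π → ℝ a metric, J : Π → ℝ bounded above, and δ > 0. Suppose the feasible set of the PBT problem {(π₁,…,π_M) : D(πⱼ,πₖ) ≥ δ ∀ j≠k} is nonempty. Then the feasible set of the iterative problem with threshold δ/2 is nonempty at every step i ≤ M: i.e., given any π̃₁,…,π̃_{i-1} obtained by iteratively maximizing J under the (δ/2)-constraints, there exists π with D(π, π̃ⱼ) ≥ δ/2 for all j < i. In particular, at least one of the M points of any PBT-feasible tuple is (δ/2)-far from all of π̃₁,…,π̃_{i-1}. -/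
/-! A point lies within distance `< δ/2` of at most one member of a `δ`-separated family,
by the triangle inequality. Hence fewer points than the family has members cannot come
`δ/2`-close to all of them, and some member is `δ/2`-far from every one of them. -/

section Separated

variable {X ι : Type*} [PseudoMetricSpace X] {δ : ℝ} {p : ι → X}

theorem eq_of_dist_lt_half_of_pairwise_le_dist
    (hp : Pairwise fun j k => δ ≤ dist (p j) (p k)) {z : X} {j k : ι}
    (hj : dist (p j) z < δ / 2) (hk : dist (p k) z < δ / 2) : j = k := by
  by_contra hjk
  linarith [hp hjk, dist_triangle_right (p j) (p k) z]

theorem exists_forall_half_le_dist_of_card_lt {κ : Type*} [Fintype ι] [Fintype κ]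
    (hp : Pairwise fun j k => δ ≤ dist (p j) (p k)) (y : κ → X)
    (hcard : Fintype.card κ < Fintype.card ι) :
    ∃ k, ∀ j, δ / 2 ≤ dist (p k) (y j) := by
  by_contra! hclose
  choose f hf using hclose
  have hf_inj : Function.Injective f := fun k k' hkk' =>
    eq_of_dist_lt_half_of_pairwise_le_dist hp (hf k) (hkk' ▸ hf k')
  exact (Fintype.card_le_of_injective f hf_inj).not_gt hcard

end Separated

theorem stmt_10_general {X : Type*} [MetricSpace X] (δ : ℝ) (M : ℕ) (hM : 1 ≤ M)
    (p : Fin M → X)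
    (hfeas : ∀ j k : Fin M, j ≠ k → δ ≤ dist (p j) (p k))
    (i : ℕ) (hi : i ≤ M) (y : Fin (i - 1) → X) :
    (∃ k : Fin M, ∀ j : Fin (i - 1), δ / 2 ≤ dist (p k) (y j)) ∧
    (∃ x : X, ∀ j : Fin (i - 1), δ / 2 ≤ dist x (y j)) := by
  have hcard : Fintype.card (Fin (i - 1)) < Fintype.card (Fin M) := by
    simp only [Fintype.card_fin]
    omega
  obtain ⟨k, hk⟩ := exists_forall_half_le_dist_of_card_lt (fun j k hjk => hfeas j k hjk) y hcard
  exact ⟨⟨k, hk⟩, ⟨p k, hk⟩⟩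

/-- Feasibility of every step of the iterative problem with threshold δ/2,
given a nonempty feasible set for the PBT problem with threshold δ: some point
of the δ-separated M-tuple is (δ/2)-far from all the i-1 previously obtained
iterative policies. -/
theorem stmt_10 {X : Type*} [MetricSpace X] (J : X → ℝ) (C : ℝ)
    (hbd : ∀ x, J x ≤ C) (δ : ℝ) (hδ : 0 < δ) (M : ℕ) (hM : 1 ≤ M)
    (p : Fin M → X)
    (hfeas : ∀ j k : Fin M, j ≠ k → δ ≤ dist (p j) (p k))
    (i : ℕ) (hi : i ≤ M) (y : Fin (i - 1) → X)
    (hiterfeas : ∀ j j' : Fin (i - 1), j' < j → δ / 2 ≤ dist (y j) (y j'))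
    (hitermax : ∀ j : Fin (i - 1), ∀ x : X,
      (∀ j' : Fin (i - 1), j' < j → δ / 2 ≤ dist x (y j')) → J x ≤ J (y j)) :
    (∃ k : Fin M, ∀ j : Fin (i - 1), δ / 2 ≤ dist (p k) (y j)) ∧
    (∃ x : X, ∀ j : Fin (i - 1), δ / 2 ≤ dist x (y j)) :=
  stmt_10_general δ M hM p hfeas i hi y
end
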